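/- Let Ω ⊆ ℝ³ be open and ν₁, ν₂ : Ω → ℝ be C¹ functions with ν₁² + ν₂² = 1 on Ω and Xν₁ + Yν₂ = 0 on Ω (vanishing horizontal mean curvature). Let γ = (x,y,t) : I → Ω be a C¹ curve with ẋ = −ν₂∘γ, ẏ = ν₁∘γ and ṫ = 2(yẋ − xẏ) on I (an integral curve of the horizontal vector field 𝕁ν^h = −ν₂X + ν₁Y). Then γ is a Euclidean straight line: γ(s) = γ(s₀) + (s − s₀)·γ̇(s₀) for all s, s₀ ∈ I. -/

import Mathlib

/-
Differentiating `ν₁² + ν₂² = 1` gives `ν₁ Zν₁ + ν₂ Zν₂ = 0` for `Z = X, Y`, and together with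
`Xν₁ = -Yν₂` this makes both `𝕁ν^h ν₁ = -ν₂ Xν₁ + ν₁ Yν₁` and `𝕁ν^h ν₂ = -ν₂ Xν₂ + ν₁ Yν₂`
vanish. Hence the horizontal normal is constant along each leaf, so the leaf has constant
velocity in `x` and `y`; then `y ẋ - x ẏ` has derivative `ẏ ẋ - ẋ ẏ = 0`, so `ṫ` is constant too.
-/

/-- The Heisenberg horizontal vector field X = ∂/∂x + 2y ∂/∂t acting on a function
of (x,y,t) ∈ ℝ³. -/
noncomputable def Xop (f : ℝ × ℝ × ℝ → ℝ) (p : ℝ × ℝ × ℝ) : ℝ :=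
  deriv (fun x => f (x, p.2.1, p.2.2)) p.1
    + 2 * p.2.1 * deriv (fun t => f (p.1, p.2.1, t)) p.2.2

/-- The Heisenberg horizontal vector field Y = ∂/∂y − 2x ∂/∂t acting on a function
of (x,y,t) ∈ ℝ³. -/
noncomputable def Yop (f : ℝ × ℝ × ℝ → ℝ) (p : ℝ × ℝ × ℝ) : ℝ :=
  deriv (fun y => f (p.1, y, p.2.2)) p.2.1
    - 2 * p.1 * deriv (fun t => f (p.1, p.2.1, t)) p.2.2

namespace Set.OrdConnected

variable {I : Set ℝ} (hI : I.OrdConnected) {f : ℝ → ℝ} {c : ℝ}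
include hI

theorem eq_add_sub_mul_of_hasDerivAt (hf : ∀ s ∈ I, HasDerivAt f c s) {s s₀ : ℝ}
    (hs : s ∈ I) (hs₀ : s₀ ∈ I) : f s = f s₀ + (s - s₀) * c := by
  have hg : ∀ σ ∈ I, HasDerivWithinAt (fun σ => f σ - σ * c) 0 I σ := fun σ hσ => by
    have h := ((hf σ hσ).sub (hasDerivAt_mul_const c)).hasDerivWithinAt (s := I)
    rwa [sub_self] at h
  have := hI.convex.norm_image_sub_le_of_norm_hasDerivWithin_le hg (fun _ _ => norm_zero.le)
    hs₀ hs
  rw [zero_mul, norm_le_zero_iff] at this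
  linarith

theorem eq_of_hasDerivAt_zero (hf : ∀ s ∈ I, HasDerivAt f 0 s) {s s₀ : ℝ}
    (hs : s ∈ I) (hs₀ : s₀ ∈ I) : f s = f s₀ := by
  simpa using hI.eq_add_sub_mul_of_hasDerivAt hf hs hs₀

end Set.OrdConnected

section HorizontalDerivatives

theorem hasDerivAt_slice_fst (p : ℝ × ℝ × ℝ) :
    HasDerivAt (fun a : ℝ => ((a, p.2.1, p.2.2) : ℝ × ℝ × ℝ)) (1, 0, 0) p.1 :=
  (hasDerivAt_id p.1).prodMk (hasDerivAt_const _ _)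

theorem hasDerivAt_slice_snd_fst (p : ℝ × ℝ × ℝ) :
    HasDerivAt (fun a : ℝ => ((p.1, a, p.2.2) : ℝ × ℝ × ℝ)) (0, 1, 0) p.2.1 :=
  (hasDerivAt_const _ _).prodMk ((hasDerivAt_id _).prodMk (hasDerivAt_const _ _))

theorem hasDerivAt_slice_snd_snd (p : ℝ × ℝ × ℝ) :
    HasDerivAt (fun a : ℝ => ((p.1, p.2.1, a) : ℝ × ℝ × ℝ)) (0, 0, 1) p.2.2 :=
  (hasDerivAt_const _ _).prodMk ((hasDerivAt_const _ _).prodMk (hasDerivAt_id _))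

variable {f : ℝ × ℝ × ℝ → ℝ} {A : ℝ × ℝ × ℝ →L[ℝ] ℝ} {p : ℝ × ℝ × ℝ}

theorem HasFDerivAt.Xop_eq (hf : HasFDerivAt f A p) : Xop f p = A (1, 0, 2 * p.2.1) := by
  have hx : HasDerivAt (fun a => f (a, p.2.1, p.2.2)) (A (1, 0, 0)) p.1 :=
    hf.comp_hasDerivAt p.1 (hasDerivAt_slice_fst p)
  have ht : HasDerivAt (fun a => f (p.1, p.2.1, a)) (A (0, 0, 1)) p.2.2 :=
    hf.comp_hasDerivAt p.2.2 (hasDerivAt_slice_snd_snd p)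
  have hv : ((1, 0, 2 * p.2.1) : ℝ × ℝ × ℝ) = (1, 0, 0) + (2 * p.2.1) • (0, 0, 1) := by simp
  rw [Xop, hx.deriv, ht.deriv, hv, map_add, map_smul, smul_eq_mul]

theorem HasFDerivAt.Yop_eq (hf : HasFDerivAt f A p) : Yop f p = A (0, 1, -2 * p.1) := by
  have hy : HasDerivAt (fun a => f (p.1, a, p.2.2)) (A (0, 1, 0)) p.2.1 :=
    hf.comp_hasDerivAt p.2.1 (hasDerivAt_slice_snd_fst p)
  have ht : HasDerivAt (fun a => f (p.1, p.2.1, a)) (A (0, 0, 1)) p.2.2 :=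
    hf.comp_hasDerivAt p.2.2 (hasDerivAt_slice_snd_snd p)
  have hv : ((0, 1, -2 * p.1) : ℝ × ℝ × ℝ) = (0, 1, 0) + (-2 * p.1) • (0, 0, 1) := by simp
  rw [Yop, hy.deriv, ht.deriv, hv, map_add, map_smul, smul_eq_mul]
  ring

theorem HasFDerivAt.apply_horizontal (hf : HasFDerivAt f A p) (a b : ℝ) :
    A (a, b, 2 * (p.2.1 * a - p.1 * b)) = a * Xop f p + b * Yop f p := by
  have hv : ((a, b, 2 * (p.2.1 * a - p.1 * b)) : ℝ × ℝ × ℝ)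
      = a • (1, 0, 2 * p.2.1) + b • (0, 1, -2 * p.1) := by
    simp only [Prod.smul_mk, smul_eq_mul, Prod.mk_add_mk]
    ext <;> simp only <;> ring
  rw [hf.Xop_eq, hf.Yop_eq, hv, map_add, map_smul, map_smul, smul_eq_mul, smul_eq_mul]

theorem HasFDerivAt.hasDerivAt_comp_horizontal {γ : ℝ → ℝ × ℝ × ℝ} {s a b : ℝ}
    (hf : HasFDerivAt f A (γ s))
    (hγ : HasDerivAt γ (a, b, 2 * ((γ s).2.1 * a - (γ s).1 * b)) s) :
    HasDerivAt (f ∘ γ) (a * Xop f (γ s) + b * Yop f (γ s)) s := by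
  rw [← hf.apply_horizontal]
  exact hf.comp_hasDerivAt s hγ

end HorizontalDerivatives

theorem smul_add_smul_eq_zero_of_sq_add_sq_eq_one {E : Type*} [NormedAddCommGroup E]
    [NormedSpace ℝ E] {ν₁ ν₂ : E → ℝ} {A₁ A₂ : E →L[ℝ] ℝ} {p : E}
    (h₁ : HasFDerivAt ν₁ A₁ p) (h₂ : HasFDerivAt ν₂ A₂ p)
    (hunit : ∀ᶠ q in nhds p, ν₁ q ^ 2 + ν₂ q ^ 2 = 1) :
    ν₁ p • A₁ + ν₂ p • A₂ = 0 := by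
  have hsq := (h₁.mul h₁).add (h₂.mul h₂)
  have hconst : HasFDerivAt (fun q => ν₁ q * ν₁ q + ν₂ q * ν₂ q) (0 : E →L[ℝ] ℝ) p :=
    (hasFDerivAt_const 1 p).congr_of_eventuallyEq (hunit.mono fun q hq => by rw [← hq]; ring)
  have h2 : (2 : ℝ) • (ν₁ p • A₁ + ν₂ p • A₂) = 0 := by
    rw [← hsq.unique hconst]
    module
  exact (smul_eq_zero.1 h2).resolve_left two_ne_zero

theorem neg_mul_Xop_add_mul_Yop_eq_zero {ν₁ ν₂ : ℝ × ℝ × ℝ → ℝ} {A₁ A₂ : ℝ × ℝ × ℝ →L[ℝ] ℝ}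
    {p : ℝ × ℝ × ℝ} (h₁ : HasFDerivAt ν₁ A₁ p) (h₂ : HasFDerivAt ν₂ A₂ p)
    (hunit : ∀ᶠ q in nhds p, ν₁ q ^ 2 + ν₂ q ^ 2 = 1) (hmin : Xop ν₁ p + Yop ν₂ p = 0) :
    -ν₂ p * Xop ν₁ p + ν₁ p * Yop ν₁ p = 0 ∧ -ν₂ p * Xop ν₂ p + ν₁ p * Yop ν₂ p = 0 := by
  have hzero := smul_add_smul_eq_zero_of_sq_add_sq_eq_one h₁ h₂ hunit
  have hX : ν₁ p * Xop ν₁ p + ν₂ p * Xop ν₂ p = 0 := by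
    simpa [h₁.Xop_eq, h₂.Xop_eq] using DFunLike.congr_fun hzero (1, 0, 2 * p.2.1)
  have hY : ν₁ p * Yop ν₁ p + ν₂ p * Yop ν₂ p = 0 := by
    simpa [h₁.Yop_eq, h₂.Yop_eq] using DFunLike.congr_fun hzero (0, 1, -2 * p.1)
  constructor
  · linear_combination hY - ν₂ p * hmin
  · linear_combination -hX + ν₁ p * hmin

theorem eq_line_of_hasDerivAt_horizontal {I : Set ℝ} (hI : I.OrdConnected) {x y t : ℝ → ℝ}
    {a b : ℝ} (hx : ∀ s ∈ I, HasDerivAt x a s) (hy : ∀ s ∈ I, HasDerivAt y b s)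
    (ht : ∀ s ∈ I, HasDerivAt t (2 * (y s * a - x s * b)) s) {s s₀ : ℝ}
    (hs : s ∈ I) (hs₀ : s₀ ∈ I) :
    x s = x s₀ + (s - s₀) * deriv x s₀ ∧
      y s = y s₀ + (s - s₀) * deriv y s₀ ∧
      t s = t s₀ + (s - s₀) * deriv t s₀ := by
  have hc : ∀ σ ∈ I, HasDerivAt (fun σ => y σ * a - x σ * b) 0 σ := fun σ hσ => by
    have h := ((hy σ hσ).mul_const a).sub ((hx σ hσ).mul_const b)
    rwa [mul_comm b a, sub_self] at h
  have ht' : ∀ σ ∈ I, HasDerivAt t (2 * (y s₀ * a - x s₀ * b)) σ := fun σ hσ => by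
    rw [← hI.eq_of_hasDerivAt_zero hc hσ hs₀]
    exact ht σ hσ
  rw [(hx s₀ hs₀).deriv, (hy s₀ hs₀).deriv, (ht' s₀ hs₀).deriv]
  exact ⟨hI.eq_add_sub_mul_of_hasDerivAt hx hs hs₀, hI.eq_add_sub_mul_of_hasDerivAt hy hs hs₀,
    hI.eq_add_sub_mul_of_hasDerivAt ht' hs hs₀⟩

theorem stmt_5_general (Ω : Set (ℝ × ℝ × ℝ)) (hΩ : IsOpen Ω)
    (ν₁ ν₂ : ℝ × ℝ × ℝ → ℝ)
    (hν₁ : ContDiffOn ℝ 1 ν₁ Ω) (hν₂ : ContDiffOn ℝ 1 ν₂ Ω)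
    (hunit : ∀ p ∈ Ω, ν₁ p ^ 2 + ν₂ p ^ 2 = 1)
    (hmin : ∀ p ∈ Ω, Xop ν₁ p + Yop ν₂ p = 0)
    (I : Set ℝ) (hconn : I.OrdConnected)
    (x y t : ℝ → ℝ)
    (hmem : ∀ s ∈ I, (x s, y s, t s) ∈ Ω)
    (hdx : ∀ s ∈ I, HasDerivAt x (-(ν₂ (x s, y s, t s))) s)
    (hdy : ∀ s ∈ I, HasDerivAt y (ν₁ (x s, y s, t s)) s)
    (hdt : ∀ s ∈ I, HasDerivAt t
      (2 * (y s * (-(ν₂ (x s, y s, t s))) - x s * ν₁ (x s, y s, t s))) s) :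
    ∀ s ∈ I, ∀ s₀ ∈ I,
      x s = x s₀ + (s - s₀) * deriv x s₀ ∧
      y s = y s₀ + (s - s₀) * deriv y s₀ ∧
      t s = t s₀ + (s - s₀) * deriv t s₀ := by
  set γ : ℝ → ℝ × ℝ × ℝ := fun s => (x s, y s, t s)
  have hleaf : ∀ s ∈ I, HasDerivAt (ν₁ ∘ γ) 0 s ∧ HasDerivAt (ν₂ ∘ γ) 0 s := by
    intro s hs
    have hΩs : Ω ∈ nhds (γ s) := hΩ.mem_nhds (hmem s hs)
    have h₁ := ((hν₁.differentiableOn one_ne_zero).differentiableAt hΩs).hasFDerivAt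
    have h₂ := ((hν₂.differentiableOn one_ne_zero).differentiableAt hΩs).hasFDerivAt
    have hγ : HasDerivAt γ
        (-ν₂ (γ s), ν₁ (γ s), 2 * ((γ s).2.1 * -ν₂ (γ s) - (γ s).1 * ν₁ (γ s))) s :=
      (hdx s hs).prodMk ((hdy s hs).prodMk (hdt s hs))
    obtain ⟨e₁, e₂⟩ := neg_mul_Xop_add_mul_Yop_eq_zero h₁ h₂
      (Filter.eventually_of_mem hΩs hunit) (hmin _ (hmem s hs))
    exact ⟨e₁ ▸ h₁.hasDerivAt_comp_horizontal hγ, e₂ ▸ h₂.hasDerivAt_comp_horizontal hγ⟩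
  intro s hs s₀ hs₀
  have hν₁γ (σ) (hσ : σ ∈ I) : ν₁ (γ σ) = ν₁ (γ s₀) :=
    hconn.eq_of_hasDerivAt_zero (fun s hs => (hleaf s hs).1) hσ hs₀
  have hν₂γ (σ) (hσ : σ ∈ I) : ν₂ (γ σ) = ν₂ (γ s₀) :=
    hconn.eq_of_hasDerivAt_zero (fun s hs => (hleaf s hs).2) hσ hs₀
  refine eq_line_of_hasDerivAt_horizontal hconn (a := -ν₂ (γ s₀)) (b := ν₁ (γ s₀))
    (fun σ hσ => ?_) (fun σ hσ => ?_) (fun σ hσ => ?_) hs hs₀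
  · rw [← hν₂γ σ hσ]; exact hdx σ hσ
  · rw [← hν₁γ σ hσ]; exact hdy σ hσ
  · rw [← hν₁γ σ hσ, ← hν₂γ σ hσ]; exact hdt σ hσ

/-- if ν₁² + ν₂² = 1 and Xν₁ + Yν₂ = 0 on an open Ω ⊆ ℝ³ (vanishing
horizontal mean curvature), then every integral curve of 𝕁ν^h = −ν₂X + ν₁Y contained in Ω
is a Euclidean straight line. -/
theorem stmt_5 (Ω : Set (ℝ × ℝ × ℝ)) (hΩ : IsOpen Ω)
    (ν₁ ν₂ : ℝ × ℝ × ℝ → ℝ)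
    (hν₁ : ContDiffOn ℝ 1 ν₁ Ω) (hν₂ : ContDiffOn ℝ 1 ν₂ Ω)
    (hunit : ∀ p ∈ Ω, ν₁ p ^ 2 + ν₂ p ^ 2 = 1)
    (hmin : ∀ p ∈ Ω, Xop ν₁ p + Yop ν₂ p = 0)
    (I : Set ℝ) (hI : IsOpen I) (hconn : I.OrdConnected)
    (x y t : ℝ → ℝ)
    (hmem : ∀ s ∈ I, (x s, y s, t s) ∈ Ω)
    (hdx : ∀ s ∈ I, HasDerivAt x (-(ν₂ (x s, y s, t s))) s)
    (hdy : ∀ s ∈ I, HasDerivAt y (ν₁ (x s, y s, t s)) s)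
    (hdt : ∀ s ∈ I, HasDerivAt t
      (2 * (y s * (-(ν₂ (x s, y s, t s))) - x s * ν₁ (x s, y s, t s))) s) :
    ∀ s ∈ I, ∀ s₀ ∈ I,
      x s = x s₀ + (s - s₀) * deriv x s₀ ∧
      y s = y s₀ + (s - s₀) * deriv y s₀ ∧
      t s = t s₀ + (s - s₀) * deriv t s₀ :=
  stmt_5_general Ω hΩ ν₁ ν₂ hν₁ hν₂ hunit hmin I hconn x y t hmem hdx hdy hdt
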